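/- arXiv:2508.20264 — 2 statements merged into one kernel-verified Lean document; each statement's English description precedes it below -/
import Mathlib

section
/- Consider a commutative diagram of abelian groups with exact rows A0 → A1 → A2 → A3 → 0 and B0 → B1 → B2 → B3 → 0, and vertical maps g_i: A_i → B_i for i = 0,1,2,3 such that g0 and g3 are isomorphisms. Then the commutative square formed by A1 → A2, g1: A1 → B1, B1 → B2, and g2: A2 → B2 is a pushout: the natural map from the amalgamated sum (B1 ⊕ A2)/{(g1(a), -φ(a)) : a ∈ A1} (where φ: A1 → A2) to B2 is an isomorphism. -/
/-- Given a commutative diagram of abelian groups with exact rows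
`A0 → A1 → A2 → A3 → 0` and `B0 → B1 → B2 → B3 → 0` and vertical maps
`g0, g1, g2, g3` with `g0` and `g3` isomorphisms, the square formed by
`A1 → A2`, `g1`, `B1 → B2`, `g2` is a pushout: the natural map
`(B1 ⊕ A2)/{(g1 a, -a12 a)} → B2` is an isomorphism. -/
theorem pushout_square_of_exact_rows
    (A0 A1 A2 A3 B0 B1 B2 B3 : Type*)
    [AddCommGroup A0] [AddCommGroup A1] [AddCommGroup A2] [AddCommGroup A3]
    [AddCommGroup B0] [AddCommGroup B1] [AddCommGroup B2] [AddCommGroup B3]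
    (a01 : A0 →+ A1) (a12 : A1 →+ A2) (a23 : A2 →+ A3)
    (b01 : B0 →+ B1) (b12 : B1 →+ B2) (b23 : B2 →+ B3)
    (g0 : A0 →+ B0) (g1 : A1 →+ B1) (g2 : A2 →+ B2) (g3 : A3 →+ B3)
    (hsq0 : ∀ a, b01 (g0 a) = g1 (a01 a))
    (hsq1 : ∀ a, b12 (g1 a) = g2 (a12 a))
    (hsq2 : ∀ a, b23 (g2 a) = g3 (a23 a))
    (htop1 : Function.Exact a01 a12) (htop2 : Function.Exact a12 a23)
    (htop3 : Function.Surjective a23)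
    (hbot1 : Function.Exact b01 b12) (hbot2 : Function.Exact b12 b23)
    (hbot3 : Function.Surjective b23)
    (hg0 : Function.Bijective g0) (hg3 : Function.Bijective g3) :
    Function.Bijective
      (QuotientAddGroup.lift (AddMonoidHom.range (g1.prod (-a12)))
        (b12.coprod g2)
        (by
          rintro x ⟨a, rfl⟩
          have : b12 (g1 a) + g2 (-a12 a) = 0 := by
            rw [map_neg, hsq1 a, add_neg_cancel]
          simpa [AddMonoidHom.mem_ker] using this)) := by
  constructor
  · rw [injective_iff_map_eq_zero]
    intro x hx
    induction x using QuotientAddGroup.induction_on with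
    | H p =>
      obtain ⟨b1, a2⟩ := p
      simp only [QuotientAddGroup.lift_mk, AddMonoidHom.coprod_apply] at hx
      -- a23 a2 = 0
      have hk : b23 (b12 b1) = 0 := (hbot2 (b12 b1)).mpr ⟨b1, rfl⟩
      have h3 : g3 (a23 a2) = 0 := by
        have := congrArg b23 hx
        rw [map_add, hk, zero_add, map_zero] at this
        rw [← hsq2, this]
      have h3' : a23 a2 = 0 := by
        apply hg3.1; rw [h3, map_zero]
      obtain ⟨a1, ha1⟩ := (htop2 a2).mp h3'
      have hb : b12 (b1 + g1 a1) = 0 := by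
        rw [map_add, hsq1, ha1, hx]
      obtain ⟨b0, hb0⟩ := (hbot1 (b1 + g1 a1)).mp hb
      obtain ⟨a0, rfl⟩ := hg0.2 b0
      rw [hsq0] at hb0
      rw [QuotientAddGroup.eq_zero_iff]
      refine ⟨a01 a0 - a1, ?_⟩
      have h12 : a12 (a01 a0) = 0 := (htop1 (a01 a0)).mpr ⟨a0, rfl⟩
      simp only [AddMonoidHom.prod_apply, AddMonoidHom.neg_apply, Prod.mk.injEq]
      constructor
      · rw [map_sub, hb0]; abel
      · rw [map_sub, h12, ha1]; abel
  · intro b2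
    obtain ⟨a2, ha2⟩ := hg3.2.comp htop3 (b23 b2)
    simp only [Function.comp] at ha2
    have : b23 (b2 - g2 a2) = 0 := by
      rw [map_sub, hsq2, ha2, sub_self]
    obtain ⟨b1, hb1⟩ := (hbot2 (b2 - g2 a2)).mp this
    refine ⟨QuotientAddGroup.mk (b1, a2), ?_⟩
    simp only [QuotientAddGroup.lift_mk, AddMonoidHom.coprod_apply]
    rw [hb1]; abel
end

section
/- Let R = ℤ[T]. Let N ⊆ R ⊕ R be the R-submodule generated by the two elements (12T, -1) and (0, 2T). Then the quotient module (R ⊕ R)/N is isomorphic as an R-module to R/(24T^2). -/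
open Polynomial

noncomputable section

abbrev Rp := Polynomial ℤ

abbrev Nsub : Submodule Rp (Rp × Rp) :=
  Submodule.span Rp ({(12 * X, -1), (0, 2 * X)} : Set (Rp × Rp))

abbrev Ip : Ideal Rp := Ideal.span ({24 * X ^ 2} : Set Rp)

/-- `(a, b) ↦ a + 12X·b` -/
def gmap : Rp × Rp →ₗ[Rp] Rp :=
  LinearMap.fst Rp Rp Rp + ((12 * X : Rp) • LinearMap.snd Rp Rp Rp)

def fmap : Rp × Rp →ₗ[Rp] Rp ⧸ Ip :=
  (Ip : Submodule Rp Rp).mkQ.comp gmap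

lemma gmap_apply (a b : Rp) : gmap (a, b) = a + 12 * X * b := by
  simp [gmap, smul_eq_mul]

lemma Nsub_le_ker : Nsub ≤ LinearMap.ker fmap := by
  rw [Submodule.span_le]
  rintro x (rfl | rfl) <;>
    simp only [SetLike.mem_coe, LinearMap.mem_ker, fmap, LinearMap.comp_apply,
      Submodule.mkQ_apply, Submodule.Quotient.mk_eq_zero, gmap_apply,
      Ideal.mem_span_singleton]
  · exact ⟨0, by ring⟩
  · exact ⟨1, by ring⟩

lemma ker_le_Nsub : LinearMap.ker fmap ≤ Nsub := by
  rintro ⟨a, b⟩ hab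
  simp only [LinearMap.mem_ker, fmap, LinearMap.comp_apply, Submodule.mkQ_apply,
    Submodule.Quotient.mk_eq_zero, gmap_apply, Ideal.mem_span_singleton] at hab
  obtain ⟨c, hc⟩ := hab
  rw [Submodule.mem_span_pair]
  refine ⟨2 * X * c - b, c, ?_⟩
  simp only [Prod.smul_mk, smul_eq_mul, Prod.mk_add_mk, Prod.mk.injEq]
  constructor
  · linear_combination -hc
  · ring

/-- Let `R = ℤ[T]` and `N ⊆ R ⊕ R` the submodule generated by `(12T, -1)` and
`(0, 2T)`. Then `(R ⊕ R)/N ≅ R/(24T²)` as `R`-modules. -/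
theorem presentation_of_chow_barM11 :
    Nonempty
      (((Polynomial ℤ × Polynomial ℤ) ⧸
          (Submodule.span (Polynomial ℤ)
            ({(12 * X, -1), (0, 2 * X)} : Set (Polynomial ℤ × Polynomial ℤ)))) ≃ₗ[Polynomial ℤ]
        (Polynomial ℤ ⧸ Ideal.span ({24 * X ^ 2} : Set (Polynomial ℤ)))) := by
  classical
  let F := Submodule.liftQ Nsub fmap Nsub_le_ker
  have hsurj : Function.Surjective F := by
    intro y
    obtain ⟨p, rfl⟩ := Ideal.Quotient.mk_surjective y
    exact ⟨Submodule.Quotient.mk (p, 0), by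
      simp [F, fmap, gmap_apply]⟩
  have hinj : Function.Injective F := by
    rw [← LinearMap.ker_eq_bot]
    exact Submodule.ker_liftQ_eq_bot _ _ _ ker_le_Nsub
  exact ⟨LinearEquiv.ofBijective F ⟨hinj, hsurj⟩⟩

end
end
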